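/- Let the infinite dihedral group D_∞ act by homeomorphisms on an infinite compact Hausdorff topological space X such that the action is minimal. Then for every x ∈ X and every finite subset F ⊆ D_∞ there exists k ∈ ℤ such that the point y = sᵏ·x satisfies g·y ≠ g'·y for any two distinct g, g' ∈ F; equivalently, Stab(y) ∩ F⁻¹F ⊆ {e} where F⁻¹F = {g⁻¹g' : g, g' ∈ F}. -/

import Mathlib

open Pointwise

/-!
A nontrivial rotation `r d` fixing a point `z` makes the orbit of `z` finite, since `i ↦ r i • z`
and `i ↦ sr i • z` are then `d`-periodic; in an infinite T1 space a finite orbit is closed and so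
not dense. Hence rotations act freely, and two reflections fixing the same point would differ by
a rotation fixing it, so at most one reflection `sr b` fixes `x`. Translating `x` by `r k`
conjugates `sr m` into `sr (m + 2k)`, so only finitely many `k` make one of the finitely many
reflections of `F⁻¹F` fix `r k • x`; any other `k` works.
-/

theorem Function.Periodic.finite_range {α β : Type*} [AddCommGroup α] [LinearOrder α]
    [IsOrderedAddMonoid α] [Archimedean α] [LocallyFiniteOrder α] {f : α → β} {c : α}
    (h : Function.Periodic f c) (hc : c ≠ 0) : (Set.range f).Finite :=
  h.image_uIcc hc 0 ▸ (Set.finite_uIcc 0 (0 + c)).image f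

section MulAction

variable {G X : Type*} [Group G] [MulAction G X]

theorem MulAction.orbit_infinite_of_dense [TopologicalSpace X] [T1Space X] [Infinite X] {x : X}
    (hx : Dense (MulAction.orbit G x)) : (MulAction.orbit G x).Infinite := fun hfin =>
  Set.infinite_univ (by rwa [← hx.closure_eq, hfin.isClosed.closure_eq])

theorem MulAction.smul_ne_smul_of_stabilizer_inter_subset {y : X} {F : Set G}
    (hF : (MulAction.stabilizer G y : Set G) ∩ (F⁻¹ * F) ⊆ {1}) :
    ∀ g ∈ F, ∀ g' ∈ F, g ≠ g' → g • y ≠ g' • y := by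
  intro g hg g' hg' hne heq
  have hstab : g⁻¹ * g' ∈ MulAction.stabilizer G y := by
    rw [MulAction.mem_stabilizer_iff, mul_smul, ← heq, inv_smul_smul]
  have hone : g⁻¹ * g' = 1 := hF ⟨hstab, Set.mul_mem_mul (Set.inv_mem_inv.mpr hg) hg'⟩
  exact hne (inv_mul_eq_one.mp hone)

end MulAction

namespace DihedralGroup

section

variable {n : ℕ} {X : Type*} [MulAction (DihedralGroup n) X]

theorem sr_mul_r_eq_r_mul_sr (m k : ZMod n) : sr m * r k = r k * sr (m + 2 * k) := by
  rw [sr_mul_r, r_mul_sr]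
  congr 1
  ring

theorem r_smul_r_smul_eq_iff (m k : ZMod n) (x : X) : r m • r k • x = r k • x ↔ r m • x = x := by
  rw [smul_smul, r_mul_r, add_comm, ← r_mul_r, mul_smul, smul_left_cancel_iff]

theorem sr_smul_r_smul_eq_iff (m k : ZMod n) (x : X) :
    sr m • r k • x = r k • x ↔ sr (m + 2 * k) • x = x := by
  rw [smul_smul, sr_mul_r_eq_r_mul_sr, mul_smul, smul_left_cancel_iff]

end

variable {X : Type*} [MulAction (DihedralGroup 0) X]

theorem orbit_finite_of_r_smul_eq {d : ZMod 0} (hd : d ≠ 0) {z : X} (hz : r d • z = z) :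
    (MulAction.orbit (DihedralGroup 0) z).Finite := by
  obtain ⟨c, rfl⟩ := ZMod.intCast_surjective d
  have hc : c ≠ 0 := by
    rintro rfl
    exact hd Int.cast_zero
  have hr : Function.Periodic (fun i : ℤ => r (Int.cast i : ZMod 0) • z) c := fun i => by
    dsimp only
    rw [Int.cast_add, ← r_mul_r, mul_smul, hz]
  have hsr : Function.Periodic (fun i : ℤ => sr (Int.cast i : ZMod 0) • z) c := fun i => by
    dsimp only
    rw [Int.cast_add, ← sr_mul_r, mul_smul, hz]
  refine ((hr.finite_range hc).union (hsr.finite_range hc)).subset ?_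
  rintro _ ⟨g, rfl⟩
  cases g with
  | r i =>
    obtain ⟨j, rfl⟩ := ZMod.intCast_surjective i
    exact Or.inl ⟨j, rfl⟩
  | sr i =>
    obtain ⟨j, rfl⟩ := ZMod.intCast_surjective i
    exact Or.inr ⟨j, rfl⟩

variable [TopologicalSpace X] [T1Space X] [Infinite X]

theorem r_smul_eq_self_iff {z : X} (hz : Dense (MulAction.orbit (DihedralGroup 0) z))
    {d : ZMod 0} : r d • z = z ↔ d = 0 := by
  refine ⟨fun hfix => ?_, fun hd => by rw [hd, r_zero, one_smul]⟩
  by_contra hd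
  exact MulAction.orbit_infinite_of_dense hz (orbit_finite_of_r_smul_eq hd hfix)

theorem setOf_sr_add_two_mul_smul_eq_subsingleton {x : X}
    (hx : Dense (MulAction.orbit (DihedralGroup 0) x)) (m : ZMod 0) :
    {k : ZMod 0 | sr (m + 2 * k) • x = x}.Subsingleton := by
  intro k hk k' hk'
  have hrot : r (m + 2 * k' - (m + 2 * k)) • x = x := by
    rw [← sr_mul_sr, mul_smul, hk', hk]
  rw [r_smul_eq_self_iff hx, add_sub_add_left_eq_sub, ← mul_sub, mul_eq_zero,
    sub_eq_zero] at hrot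
  exact (hrot.resolve_left two_ne_zero).symm

theorem exists_stabilizer_r_smul_inter_subset {x : X}
    (hx : Dense (MulAction.orbit (DihedralGroup 0) x)) {S : Set (DihedralGroup 0)}
    (hS : S.Finite) : ∃ k : ZMod 0,
      (MulAction.stabilizer (DihedralGroup 0) (r k • x) : Set (DihedralGroup 0)) ∩ S ⊆ {1} := by
  have hM : {m | sr m ∈ S}.Finite := hS.preimage fun _ _ _ _ => sr.inj
  obtain ⟨k, hk⟩ := (hM.biUnion fun m _ =>
    (setOf_sr_add_two_mul_smul_eq_subsingleton hx m).finite).exists_notMem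
  refine ⟨k, ?_⟩
  rintro g ⟨hg, hgS⟩
  rw [SetLike.mem_coe, MulAction.mem_stabilizer_iff] at hg
  cases g with
  | r m =>
    rw [r_smul_r_smul_eq_iff, r_smul_eq_self_iff hx] at hg
    rw [hg, r_zero, Set.mem_singleton_iff]
  | sr m =>
    rw [sr_smul_r_smul_eq_iff] at hg
    exact absurd (Set.mem_biUnion (x := m) hgS hg) hk

end DihedralGroup

theorem dihedral_minimal_exists_translate_with_free_point_general
    {X : Type*} [TopologicalSpace X] [T2Space X] [Infinite X]
    [MulAction (DihedralGroup 0) X]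
    (hmin : ∀ x : X, Dense (MulAction.orbit (DihedralGroup 0) x))
    (x : X) (F : Finset (DihedralGroup 0)) :
    ∃ k : ℤ,
      (∀ g ∈ F, ∀ g' ∈ F, g ≠ g' →
        g • (((DihedralGroup.r 1 : DihedralGroup 0) ^ k) • x) ≠
          g' • (((DihedralGroup.r 1 : DihedralGroup 0) ^ k) • x)) ∧
      (MulAction.stabilizer (DihedralGroup 0)
            (((DihedralGroup.r 1 : DihedralGroup 0) ^ k) • x) : Set (DihedralGroup 0)) ∩
          ((F : Set (DihedralGroup 0))⁻¹ * (F : Set (DihedralGroup 0))) ⊆ {1} := by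
  obtain ⟨k, hk⟩ := DihedralGroup.exists_stabilizer_r_smul_inter_subset (hmin x)
    ((F.finite_toSet.inv).mul F.finite_toSet)
  obtain ⟨k, rfl⟩ := ZMod.intCast_surjective k
  rw [← DihedralGroup.r_one_zpow] at hk
  exact ⟨k, MulAction.smul_ne_smul_of_stabilizer_inter_subset hk, hk⟩

/-- For a minimal action of the infinite dihedral group `D_∞` (realized as `DihedralGroup 0`,
with `s = r 1`) by homeomorphisms on an infinite compact Hausdorff space `X`: for every
`x ∈ X` and every finite `F ⊆ D_∞` there is `k ∈ ℤ` such that the point `y = sᵏ • x`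
satisfies `g • y ≠ g' • y` for all distinct `g, g' ∈ F`; equivalently
`Stab(y) ∩ F⁻¹F ⊆ {e}`. -/
theorem dihedral_minimal_exists_translate_with_free_point
    {X : Type*} [TopologicalSpace X] [CompactSpace X] [T2Space X] [Infinite X]
    [MulAction (DihedralGroup 0) X] [ContinuousConstSMul (DihedralGroup 0) X]
    (hmin : ∀ x : X, Dense (MulAction.orbit (DihedralGroup 0) x))
    (x : X) (F : Finset (DihedralGroup 0)) :
    ∃ k : ℤ,
      (∀ g ∈ F, ∀ g' ∈ F, g ≠ g' →
        g • (((DihedralGroup.r 1 : DihedralGroup 0) ^ k) • x) ≠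
          g' • (((DihedralGroup.r 1 : DihedralGroup 0) ^ k) • x)) ∧
      (MulAction.stabilizer (DihedralGroup 0)
            (((DihedralGroup.r 1 : DihedralGroup 0) ^ k) • x) : Set (DihedralGroup 0)) ∩
          ((F : Set (DihedralGroup 0))⁻¹ * (F : Set (DihedralGroup 0))) ⊆ {1} :=
  dihedral_minimal_exists_translate_with_free_point_general hmin x F
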